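/- Fix n ≥ 3 and define the Leibniz superalgebra SL on even basis {e₁,…,e_n, x} and odd basis {y₁,…,y_{n-1}} by: [e₁,e₁]=e₃, [e_i,e₁]=e_{i+1} (2≤i≤n-1), [y_j,e₁]=y_{j+1} (1≤j≤n-2), [e₁,y₁]=½y₂, [e_i,y₁]=½y_i (2≤i≤n-1), [y₁,y₁]=e₁, [y_j,y₁]=e_{j+1} (2≤j≤n-1), [e₁,x]=2e₁, [e_i,x]=2(i-1)e_i (2≤i≤n), [y_i,x]=(2i-1)y_i (1≤i≤n-1), [x,e₁]=-2e₁, [x,y₁]=-y₁, all other basis products zero. Then SL satisfies the Leibniz superidentity, SL is solvable, and its ideal N spanned by {e₁,…,e_n,y₁,…,y_{n-1}} is nilpotent with [SL,SL] ⊆ N. -/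

import Mathlib

/-!
Write `R w = br.flip w` for right multiplication by `w`. For a pair `(v, w)` of homogeneous
elements the Leibniz superidentity reads `R [v, w] = R w ∘ R v - (-1)^{|v||w|} R v ∘ R w`; both
sides are bilinear in `(v, w)`, so it suffices to check it on basis vectors. The table gives
`R (e i) = 0` and `R (y j) = 0` for `i, j ≥ 2`, and right multiplying these vectors by anything
stays in their span, so only pairs from `{x, e 1, y 1}` matter. For these the identity amounts to
`[R x, R (e 1)] = 2 R (e 1)`, `[R x, R (y 1)] = R (y 1)` and `R (e 1) = 2 R (y 1) ∘ R (y 1)`.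

The weights `eWeight i` of `e i` and `2 j - 1` of `y j` are their eigenvalues under `R x`. Every
bracket lies in `N`, and bracketing with an element of `N` only acts through `R (e 1)` and
`R (y 1)`, which raise weights by `2` and `1`. Hence the `k`-th term of the lower central series
of `N` is spanned by vectors of weight `> k`, and it vanishes once `k ≥ 2 n`; since
`[SL, SL] ⊆ N`, the derived series is dominated by it.
-/

/-- Derived series: `derSeries br 0 = ⊤`, `derSeries br (k+1) = [derSeries br k, derSeries br k]`. -/
def derSeries {V : Type*} [AddCommGroup V] [Module ℂ V]
    (br : V →ₗ[ℂ] V →ₗ[ℂ] V) : ℕ → Submodule ℂ V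
  | 0 => ⊤
  | k + 1 => Submodule.span ℂ
      {z | ∃ a ∈ derSeries br k, ∃ b ∈ derSeries br k, z = br a b}

/-- Lower central series of a subspace N: `lcsIn br N 0 = N`,
`lcsIn br N (k+1) = [lcsIn br N k, N]`. -/
def lcsIn {V : Type*} [AddCommGroup V] [Module ℂ V]
    (br : V →ₗ[ℂ] V →ₗ[ℂ] V) (N : Submodule ℂ V) : ℕ → Submodule ℂ V
  | 0 => N
  | k + 1 => Submodule.span ℂ {z | ∃ a ∈ lcsIn br N k, ∃ b ∈ N, z = br a b}

open Submodule Set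

section Bracket

variable {V : Type*} [AddCommGroup V] [Module ℂ V] (br : V →ₗ[ℂ] V →ₗ[ℂ] V)

lemma apply_mem_of_span {s t : Set V} {P : Submodule ℂ V}
    (h : ∀ a ∈ s, ∀ b ∈ t, br a b ∈ P) {a b : V} (ha : a ∈ span ℂ s) (hb : b ∈ span ℂ t) :
    br a b ∈ P := by
  have : map₂ br (span ℂ s) (span ℂ t) ≤ P := by
    rw [map₂_span_span, span_le]
    rintro _ ⟨a, ha, b, hb, rfl⟩
    exact h a ha b hb
  exact this (apply_mem_map₂ br ha hb)

def IsLeibnizPair (c : ℂ) (v w : V) : Prop :=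
  br.flip (br v w) = br.flip w ∘ₗ br.flip v - c • br.flip v ∘ₗ br.flip w

lemma isLeibnizPair_iff {c : ℂ} {v w : V} :
    IsLeibnizPair br c v w ↔ ∀ u, br u (br v w) = br (br u v) w - c • br (br u w) v := by
  simp [IsLeibnizPair, LinearMap.ext_iff]

lemma isLeibnizPair_of_span {c : ℂ} {s t : Set V}
    (h : ∀ v ∈ s, ∀ w ∈ t, IsLeibnizPair br c v w) {v w : V} (hv : v ∈ span ℂ s)
    (hw : w ∈ span ℂ t) : IsLeibnizPair br c v w := by
  unfold IsLeibnizPair at *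
  induction hv, hw using span_induction₂ with
  | mem_mem v w hv hw => exact h v hv w hw
  | zero_left | zero_right => simp
  | add_left _ _ _ _ _ _ h₁ h₂ | add_right _ _ _ _ _ _ h₁ h₂ =>
    simp only [map_add, LinearMap.add_apply, LinearMap.add_comp, LinearMap.comp_add, h₁, h₂]
    module
  | smul_left _ _ _ _ _ h | smul_right _ _ _ _ _ h =>
    simp only [map_smul, LinearMap.smul_apply, LinearMap.smul_comp, LinearMap.comp_smul, h]
    module

lemma derSeries_succ_le {N : Submodule ℂ V} (hN : ∀ u v, br u v ∈ N) (k : ℕ) :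
    derSeries br (k + 1) ≤ N :=
  span_le.2 fun _ ⟨a, _, b, _, hz⟩ => hz ▸ hN a b

lemma derSeries_succ_le_lcsIn {N : Submodule ℂ V} (hN : ∀ u v, br u v ∈ N) :
    ∀ k, derSeries br (k + 1) ≤ lcsIn br N k
  | 0 => derSeries_succ_le br hN 0
  | k + 1 => span_le.2 fun _ ⟨a, ha, b, hb, hz⟩ =>
      subset_span ⟨a, derSeries_succ_le_lcsIn hN k ha, b, derSeries_succ_le br hN k hb, hz⟩

lemma lcsIn_le_of_filtration {N : Submodule ℂ V} {F : ℕ → Submodule ℂ V} (hN : N ≤ F 1)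
    (hF : ∀ K, ∀ a ∈ F K, ∀ b ∈ N, br a b ∈ F (K + 1)) : ∀ k, lcsIn br N k ≤ F (k + 1)
  | 0 => hN
  | k + 1 => span_le.2 fun _ ⟨a, ha, b, hb, hz⟩ =>
      hz ▸ hF _ a (lcsIn_le_of_filtration hN hF k ha) b hb

end Bracket

def eWeight : ℕ → ℕ
  | 0 => 0
  | 1 => 2
  | i + 2 => 2 * (i + 1)

section Weights

variable {V : Type*} [AddCommGroup V] [Module ℂ V] {e y : ℕ → V}

def weightFiltration (e y : ℕ → V) (K : ℕ) : Submodule ℂ V :=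
  span ℂ (e '' {i | K ≤ eWeight i} ∪ y '' {j | K ≤ 2 * j - 1})

lemma e_mem_weightFiltration {K i : ℕ} (h : K ≤ eWeight i) : e i ∈ weightFiltration e y K :=
  subset_span (Or.inl ⟨i, h, rfl⟩)

lemma y_mem_weightFiltration {K j : ℕ} (h : K ≤ 2 * j - 1) : y j ∈ weightFiltration e y K :=
  subset_span (Or.inr ⟨j, h, rfl⟩)

end Weights

structure IsSLTable (n : ℕ) {V : Type*} [AddCommGroup V] [Module ℂ V]
    (br : V →ₗ[ℂ] V →ₗ[ℂ] V) (e y : ℕ → V) (x : V) : Prop where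
  two_le : 2 ≤ n
  span_eq_top : span ℂ (insert x (range e ∪ range y)) = ⊤
  e_eq_zero : ∀ k, ¬(1 ≤ k ∧ k ≤ n) → e k = 0
  y_eq_zero : ∀ k, ¬(1 ≤ k ∧ k ≤ n - 1) → y k = 0
  ee_one : ∀ i, 1 ≤ i → i ≤ n → br (e i) (e 1) = if i = 1 then e 3 else e (i + 1)
  ee : ∀ i j, 1 ≤ i → i ≤ n → 2 ≤ j → j ≤ n → br (e i) (e j) = 0
  ye_one : ∀ j, 1 ≤ j → j ≤ n - 1 → br (y j) (e 1) = y (j + 1)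
  ye : ∀ j i, 1 ≤ j → j ≤ n - 1 → 2 ≤ i → i ≤ n → br (y j) (e i) = 0
  ey_one : ∀ i, 1 ≤ i → i ≤ n →
    br (e i) (y 1) = if i = 1 then (1 / 2 : ℂ) • y 2 else (1 / 2 : ℂ) • y i
  ey : ∀ i j, 1 ≤ i → i ≤ n → 2 ≤ j → j ≤ n - 1 → br (e i) (y j) = 0
  yy_one : ∀ j, 1 ≤ j → j ≤ n - 1 → br (y j) (y 1) = if j = 1 then e 1 else e (j + 1)
  yy : ∀ j k, 1 ≤ j → j ≤ n - 1 → 2 ≤ k → k ≤ n - 1 → br (y j) (y k) = 0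
  ex : ∀ i, 1 ≤ i → i ≤ n → br (e i) x = (if i = 1 then (2 : ℂ) else 2 * ((i : ℂ) - 1)) • e i
  yx : ∀ i, 1 ≤ i → i ≤ n - 1 → br (y i) x = (2 * (i : ℂ) - 1) • y i
  xe : ∀ i, 1 ≤ i → i ≤ n → br x (e i) = if i = 1 then (-2 : ℂ) • e 1 else 0
  xy : ∀ j, 1 ≤ j → j ≤ n - 1 → br x (y j) = if j = 1 then -y 1 else 0
  xx : br x x = 0

namespace IsSLTable

variable {n : ℕ} {V : Type*} [AddCommGroup V] [Module ℂ V] {br : V →ₗ[ℂ] V →ₗ[ℂ] V}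
  {e y : ℕ → V} {x : V} (T : IsSLTable n br e y x)
include T

/- The table extended to all indices, in the shapes `0`, `1`, `i + 2` that appear after case
splitting an index. -/

lemma e_zero : e 0 = 0 := T.e_eq_zero 0 (by omega)
lemma y_zero : y 0 = 0 := T.y_eq_zero 0 (by omega)

lemma e_one_e_one : br (e 1) (e 1) = e 3 := by
  simpa using T.ee_one 1 le_rfl (by have := T.two_le; omega)

lemma e_e_one (i : ℕ) : br (e (i + 2)) (e 1) = e (i + 3) := by
  by_cases i + 2 ≤ n <;> simp (disch := omega) [T.e_eq_zero, T.ee_one]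

lemma e_e (i j : ℕ) : br (e i) (e (j + 2)) = 0 := by
  by_cases 1 ≤ i ∧ i ≤ n <;> by_cases j + 2 ≤ n <;> simp (disch := omega) [T.e_eq_zero, T.ee]

lemma y_e_one (j : ℕ) : br (y (j + 1)) (e 1) = y (j + 2) := by
  by_cases j + 1 ≤ n - 1 <;> simp (disch := omega) [T.y_eq_zero, T.ye_one]

lemma y_e (i j : ℕ) : br (y i) (e (j + 2)) = 0 := by
  by_cases 1 ≤ i ∧ i ≤ n - 1 <;> by_cases j + 2 ≤ n <;>
    simp (disch := omega) [T.e_eq_zero, T.y_eq_zero, T.ye]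

lemma e_one_y_one : br (e 1) (y 1) = (1 / 2 : ℂ) • y 2 := by
  simpa using T.ey_one 1 le_rfl (by have := T.two_le; omega)

lemma e_y_one (i : ℕ) : br (e (i + 2)) (y 1) = (1 / 2 : ℂ) • y (i + 2) := by
  by_cases i + 2 ≤ n <;> simp (disch := omega) [T.e_eq_zero, T.y_eq_zero, T.ey_one]

lemma e_y (i j : ℕ) : br (e i) (y (j + 2)) = 0 := by
  by_cases 1 ≤ i ∧ i ≤ n <;> by_cases j + 2 ≤ n - 1 <;>
    simp (disch := omega) [T.e_eq_zero, T.y_eq_zero, T.ey]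

lemma y_one_y_one : br (y 1) (y 1) = e 1 := by
  simpa using T.yy_one 1 le_rfl (by have := T.two_le; omega)

lemma y_y_one (j : ℕ) : br (y (j + 2)) (y 1) = e (j + 3) := by
  by_cases j + 2 ≤ n - 1 <;> simp (disch := omega) [T.e_eq_zero, T.y_eq_zero, T.yy_one]

lemma y_y (i j : ℕ) : br (y i) (y (j + 2)) = 0 := by
  by_cases 1 ≤ i ∧ i ≤ n - 1 <;> by_cases j + 2 ≤ n - 1 <;>
    simp (disch := omega) [T.y_eq_zero, T.yy]

lemma e_one_x : br (e 1) x = (2 : ℂ) • e 1 := by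
  simpa using T.ex 1 le_rfl (by have := T.two_le; omega)

lemma e_x (i : ℕ) : br (e (i + 2)) x = (2 * ((i : ℂ) + 1)) • e (i + 2) := by
  by_cases i + 2 ≤ n <;> simp (disch := omega) [T.e_eq_zero, T.ex]
  ring_nf

lemma y_x (j : ℕ) : br (y j) x = (2 * (j : ℂ) - 1) • y j := by
  by_cases 1 ≤ j ∧ j ≤ n - 1 <;> simp (disch := omega) [T.y_eq_zero, T.yx]

lemma x_e_one : br x (e 1) = (-2 : ℂ) • e 1 := by
  simpa using T.xe 1 le_rfl (by have := T.two_le; omega)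

lemma x_e (i : ℕ) : br x (e (i + 2)) = 0 := by
  by_cases i + 2 ≤ n <;> simp (disch := omega) [T.e_eq_zero, T.xe]

lemma x_y_one : br x (y 1) = -y 1 := by
  simpa using T.xy 1 le_rfl (by have := T.two_le; omega)

lemma x_y (j : ℕ) : br x (y (j + 2)) = 0 := by
  by_cases j + 2 ≤ n - 1 <;> simp (disch := omega) [T.y_eq_zero, T.xy]

lemma linearMap_ext {W : Type*} [AddCommGroup W] [Module ℂ W] {f g : V →ₗ[ℂ] W}
    (hx : f x = g x) (he : ∀ i, f (e i) = g (e i)) (hy : ∀ j, f (y j) = g (y j)) : f = g :=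
  LinearMap.ext_on T.span_eq_top (by rintro _ (rfl | ⟨i, rfl⟩ | ⟨j, rfl⟩) <;> simp [*])

lemma flip_e_add_two (j : ℕ) : br.flip (e (j + 2)) = 0 :=
  T.linearMap_ext (by simp [T.x_e]) (by simp [T.e_e]) (by simp [T.y_e])

lemma flip_y_add_two (j : ℕ) : br.flip (y (j + 2)) = 0 :=
  T.linearMap_ext (by simp [T.x_y]) (by simp [T.e_y]) (by simp [T.y_y])

lemma flip_y_one_comp_self :
    br.flip (y 1) ∘ₗ br.flip (y 1) = (1 / 2 : ℂ) • br.flip (e 1) := by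
  refine T.linearMap_ext ?_ (fun i => ?_) (fun j => ?_)
  · simp [T.x_y_one, T.y_one_y_one, T.x_e_one]
  · rcases i with _ | _ | i
    · simp [T.e_zero]
    · simp [T.e_one_y_one, T.y_y_one, T.e_one_e_one]
    · simp [T.e_y_one, T.y_y_one, T.e_e_one]
  · rcases j with _ | _ | j
    · simp [T.y_zero]
    · simp [T.y_one_y_one, T.e_one_y_one, T.y_e_one]
    · simp [T.y_y_one, T.e_y_one, T.y_e_one]

lemma flip_e_one_comp_flip_y_one :
    br.flip (e 1) ∘ₗ br.flip (y 1) = br.flip (y 1) ∘ₗ br.flip (e 1) := by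
  have h : br.flip (e 1) = (2 : ℂ) • (br.flip (y 1) ∘ₗ br.flip (y 1)) := by
    rw [T.flip_y_one_comp_self, smul_smul]; norm_num
  rw [h, LinearMap.smul_comp, LinearMap.comp_smul, LinearMap.comp_assoc]

lemma flip_x_comp_flip_e_one :
    br.flip x ∘ₗ br.flip (e 1) = br.flip (e 1) ∘ₗ br.flip x + (2 : ℂ) • br.flip (e 1) := by
  refine T.linearMap_ext ?_ (fun i => ?_) (fun j => ?_)
  · simp [T.xx, T.x_e_one, T.e_one_x]
  · rcases i with _ | _ | i
    · simp [T.e_zero]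
    · simp [T.e_one_e_one, T.e_one_x, T.e_x]; module
    · simp [T.e_e_one, T.e_x]; module
  · rcases j with _ | j
    · simp [T.y_zero]
    · simp [T.y_e_one, T.y_x]; module

lemma flip_x_comp_flip_y_one :
    br.flip x ∘ₗ br.flip (y 1) = br.flip (y 1) ∘ₗ br.flip x + br.flip (y 1) := by
  refine T.linearMap_ext ?_ (fun i => ?_) (fun j => ?_)
  · simp [T.xx, T.x_y_one, T.y_x]; norm_num
  · rcases i with _ | _ | i
    · simp [T.e_zero]
    · simp [T.e_one_y_one, T.e_one_x, T.y_x]; module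
    · simp [T.e_y_one, T.e_x, T.y_x]; module
  · rcases j with _ | _ | j
    · simp [T.y_zero]
    · simp [T.y_one_y_one, T.y_x, T.e_one_x]; module
    · simp [T.y_y_one, T.y_x, T.e_x]; module

lemma isLeibnizPair_one_of_even {v w : V} (hv : v ∈ insert x (range e ∪ range y))
    (hw : w ∈ insert x (range e)) : IsLeibnizPair br 1 v w := by
  rcases hw with rfl | ⟨_ | _ | j, rfl⟩ <;>
    rcases hv with rfl | ⟨_ | _ | i, rfl⟩ | ⟨_ | _ | i, rfl⟩ <;>
    simp [IsLeibnizPair, T.e_zero, T.y_zero, T.flip_e_add_two, T.flip_y_add_two, T.xx,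
      T.x_e_one, T.x_e, T.e_one_x, T.e_x, T.y_x, T.e_one_e_one, T.e_e_one, T.e_e, T.y_e_one,
      T.y_e, T.flip_x_comp_flip_e_one, T.flip_x_comp_flip_y_one,
      T.flip_e_one_comp_flip_y_one]
  all_goals module

lemma isLeibnizPair_one_of_even_odd {v w : V} (hv : v ∈ insert x (range e))
    (hw : w ∈ range y) : IsLeibnizPair br 1 v w := by
  rcases hw with ⟨_ | _ | j, rfl⟩ <;> rcases hv with rfl | ⟨_ | _ | i, rfl⟩ <;>
    simp [IsLeibnizPair, T.e_zero, T.y_zero, T.flip_e_add_two, T.flip_y_add_two, T.x_y_one,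
      T.x_y, T.e_one_y_one, T.e_y_one, T.e_y, T.flip_x_comp_flip_y_one,
      T.flip_e_one_comp_flip_y_one]

lemma isLeibnizPair_neg_one_of_odd {v w : V} (hv : v ∈ range y) (hw : w ∈ range y) :
    IsLeibnizPair br (-1) v w := by
  rcases hw with ⟨_ | _ | j, rfl⟩ <;> rcases hv with ⟨_ | _ | i, rfl⟩ <;>
    simp [IsLeibnizPair, T.y_zero, T.flip_e_add_two, T.flip_y_add_two, T.y_one_y_one,
      T.y_y_one, T.y_y, T.flip_y_one_comp_self]
  all_goals module

lemma isLeibnizPair_of_mem_grading {G : ZMod 2 → Submodule ℂ V}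
    (hG0 : G 0 ≤ span ℂ (insert x (range e))) (hG1 : G 1 ≤ span ℂ (range y))
    (α β : ZMod 2) {v w : V} (hv : v ∈ G α) (hw : w ∈ G β) :
    IsLeibnizPair br ((-1) ^ (α.val * β.val)) v w := by
  have hE : insert x (range e) ⊆ insert x (range e ∪ range y) :=
    insert_subset_insert subset_union_left
  have hY : range y ⊆ insert x (range e ∪ range y) := subset_union_right.trans (subset_insert _ _)
  fin_cases α <;> fin_cases β <;> simp only [Fin.zero_eta, Fin.mk_one, Fin.isValue] at hv hw ⊢ <;>
    norm_num [ZMod.val]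
  · exact isLeibnizPair_of_span br (fun v hv w hw => T.isLeibnizPair_one_of_even (hE hv) hw)
      (hG0 hv) (hG0 hw)
  · exact isLeibnizPair_of_span br (fun v hv w hw => T.isLeibnizPair_one_of_even_odd hv hw)
      (hG0 hv) (hG1 hw)
  · exact isLeibnizPair_of_span br (fun v hv w hw => T.isLeibnizPair_one_of_even (hY hv) hw)
      (hG1 hv) (hG0 hw)
  · exact isLeibnizPair_of_span br (fun v hv w hw => T.isLeibnizPair_neg_one_of_odd hv hw)
      (hG1 hv) (hG1 hw)

lemma apply_mem_span (u v : V) : br u v ∈ span ℂ (range e ∪ range y) := by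
  have he : ∀ i, e i ∈ span ℂ (range e ∪ range y) := fun i => subset_span (Or.inl ⟨i, rfl⟩)
  have hy : ∀ j, y j ∈ span ℂ (range e ∪ range y) := fun j => subset_span (Or.inr ⟨j, rfl⟩)
  refine apply_mem_of_span br ?_ (T.span_eq_top ▸ mem_top) (T.span_eq_top ▸ mem_top)
  generalize span ℂ (range e ∪ range y) = N at he hy
  rintro _ (rfl | ⟨_ | _ | i, rfl⟩ | ⟨_ | _ | i, rfl⟩) _
    (rfl | ⟨_ | _ | j, rfl⟩ | ⟨_ | _ | j, rfl⟩) <;>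
    simp [T.e_zero, T.y_zero, T.xx, T.x_e_one, T.x_e, T.x_y_one, T.x_y, T.e_one_x, T.e_x, T.y_x,
      T.e_one_e_one, T.e_e_one, T.e_e, T.y_e_one, T.y_e, T.e_one_y_one, T.e_y_one, T.e_y,
      T.y_one_y_one, T.y_y_one, T.y_y, he, hy, Submodule.smul_mem]

lemma span_le_weightFiltration_one : span ℂ (range e ∪ range y) ≤ weightFiltration e y 1 := by
  refine span_le.2 ?_
  rintro _ (⟨_ | _ | i, rfl⟩ | ⟨_ | j, rfl⟩)
  · simp [T.e_zero]
  · exact e_mem_weightFiltration (by simp only [eWeight]; omega)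
  · exact e_mem_weightFiltration (by simp only [eWeight]; omega)
  · simp [T.y_zero]
  · exact y_mem_weightFiltration (by omega)

lemma apply_mem_weightFiltration {K : ℕ} {a b : V} (ha : a ∈ weightFiltration e y K)
    (hb : b ∈ span ℂ (range e ∪ range y)) : br a b ∈ weightFiltration e y (K + 1) := by
  refine apply_mem_of_span br ?_ ha hb
  rintro _ (⟨_ | _ | i, hK, rfl⟩ | ⟨_ | _ | i, hK, rfl⟩) _
    (⟨_ | _ | j, rfl⟩ | ⟨_ | _ | j, rfl⟩) <;>
    simp [T.e_zero, T.y_zero, T.e_one_e_one, T.e_e_one, T.e_e, T.y_e_one, T.y_e, T.e_one_y_one,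
      T.e_y_one, T.e_y, T.y_one_y_one, T.y_y_one, T.y_y]
  all_goals
    first
      | refine e_mem_weightFiltration ?_
      | refine y_mem_weightFiltration ?_
    simp only [mem_ofPred_eq, zero_add, eWeight] at hK ⊢
    omega

lemma weightFiltration_eq_bot : weightFiltration e y (2 * n + 1) = ⊥ := by
  refine eq_bot_iff.2 (span_le.2 ?_)
  rintro _ (⟨_ | _ | i, hi, rfl⟩ | ⟨j, hj, rfl⟩) <;> simp only [eWeight, mem_ofPred_eq] at *
  · simp [T.e_zero]
  · simp [T.e_eq_zero 1 (by omega)]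
  · simp [T.e_eq_zero (i + 2) (by omega)]
  · simp [T.y_eq_zero j (by omega)]

lemma lcsIn_eq_bot : lcsIn br (span ℂ (range e ∪ range y)) (2 * n) = ⊥ :=
  eq_bot_iff.2 <| T.weightFiltration_eq_bot ▸ lcsIn_le_of_filtration br
    T.span_le_weightFiltration_one (fun _ _ ha _ hb => T.apply_mem_weightFiltration ha hb) (2 * n)

lemma derSeries_eq_bot : derSeries br (2 * n + 1) = ⊥ :=
  eq_bot_iff.2 <| T.lcsIn_eq_bot ▸ derSeries_succ_le_lcsIn br T.apply_mem_span (2 * n)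

end IsSLTable

section Basis

variable {n : ℕ} {V : Type*} [AddCommGroup V] [Module ℂ V]
  (bas : Module.Basis (Fin n ⊕ Unit ⊕ Fin (n - 1)) ℂ V) {eN yN : ℕ → V}

lemma range_basis_inl_subset
    (heN : ∀ k (h : 1 ≤ k ∧ k ≤ n), eN k = bas (Sum.inl ⟨k - 1, Nat.sub_one_lt_of_le h.1 h.2⟩)) :
    range (fun i : Fin n => bas (Sum.inl i)) ⊆ range eN := by
  rintro _ ⟨i, rfl⟩
  exact ⟨i + 1, heN (i + 1) ⟨by omega, i.isLt⟩⟩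

lemma range_basis_inr_inr_subset
    (hyN : ∀ k (h : 1 ≤ k ∧ k ≤ n - 1),
      yN k = bas (Sum.inr (Sum.inr ⟨k - 1, Nat.sub_one_lt_of_le h.1 h.2⟩))) :
    range (fun j : Fin (n - 1) => bas (Sum.inr (Sum.inr j))) ⊆ range yN := by
  rintro _ ⟨j, rfl⟩
  exact ⟨j + 1, hyN (j + 1) ⟨by omega, j.isLt⟩⟩

lemma span_insert_range_eq_top {x : V}
    (heN : ∀ k (h : 1 ≤ k ∧ k ≤ n), eN k = bas (Sum.inl ⟨k - 1, Nat.sub_one_lt_of_le h.1 h.2⟩))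
    (hx : x = bas (Sum.inr (Sum.inl ())))
    (hyN : ∀ k (h : 1 ≤ k ∧ k ≤ n - 1),
      yN k = bas (Sum.inr (Sum.inr ⟨k - 1, Nat.sub_one_lt_of_le h.1 h.2⟩))) :
    span ℂ (insert x (range eN ∪ range yN)) = ⊤ := by
  refine eq_top_mono (span_mono ?_) bas.span_eq
  rintro _ ⟨i | ⟨⟩ | j, rfl⟩
  · exact Or.inr (Or.inl (range_basis_inl_subset bas heN ⟨i, rfl⟩))
  · exact Or.inl hx.symm
  · exact Or.inr (Or.inr (range_basis_inr_inr_subset bas hyN ⟨j, rfl⟩))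

lemma span_range_basis_eq
    (heN : ∀ k (h : 1 ≤ k ∧ k ≤ n), eN k = bas (Sum.inl ⟨k - 1, Nat.sub_one_lt_of_le h.1 h.2⟩))
    (heN0 : ∀ k, ¬(1 ≤ k ∧ k ≤ n) → eN k = 0)
    (hyN : ∀ k (h : 1 ≤ k ∧ k ≤ n - 1),
      yN k = bas (Sum.inr (Sum.inr ⟨k - 1, Nat.sub_one_lt_of_le h.1 h.2⟩)))
    (hyN0 : ∀ k, ¬(1 ≤ k ∧ k ≤ n - 1) → yN k = 0) :
    span ℂ ((range fun i : Fin n => bas (Sum.inl i)) ∪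
      (range fun j : Fin (n - 1) => bas (Sum.inr (Sum.inr j)))) = span ℂ (range eN ∪ range yN) := by
  refine le_antisymm (span_mono (union_subset_union (range_basis_inl_subset bas heN)
    (range_basis_inr_inr_subset bas hyN))) (span_le.2 ?_)
  rintro _ (⟨k, rfl⟩ | ⟨k, rfl⟩)
  · by_cases hk : 1 ≤ k ∧ k ≤ n
    · exact subset_span (Or.inl ⟨_, (heN k hk).symm⟩)
    · simp [heN0 k hk]
  · by_cases hk : 1 ≤ k ∧ k ≤ n - 1
    · exact subset_span (Or.inr ⟨_, (hyN k hk).symm⟩)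
    · simp [hyN0 k hk]

end Basis

/-- The superalgebra SL satisfies the Leibniz superidentity, is solvable, and the
subspace N spanned by the e's and y's is a nilpotent subalgebra with [SL,SL] ⊆ N. -/
theorem statement13 {V : Type*} [AddCommGroup V] [Module ℂ V]
    (n : ℕ) (hn : 3 ≤ n)
    (bas : Module.Basis (Fin n ⊕ Unit ⊕ Fin (n - 1)) ℂ V)
    (eN yN : ℕ → V) (x : V)
    (heN : ∀ k (h : 1 ≤ k ∧ k ≤ n), eN k = bas (Sum.inl ⟨k - 1, by omega⟩))
    (heN0 : ∀ k, ¬(1 ≤ k ∧ k ≤ n) → eN k = 0)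
    (hx : x = bas (Sum.inr (Sum.inl ())))
    (hyN : ∀ k (h : 1 ≤ k ∧ k ≤ n - 1), yN k = bas (Sum.inr (Sum.inr ⟨k - 1, by omega⟩)))
    (hyN0 : ∀ k, ¬(1 ≤ k ∧ k ≤ n - 1) → yN k = 0)
    (br : V →ₗ[ℂ] V →ₗ[ℂ] V)
    -- multiplication table of SL:
    (hee1 : ∀ i, 1 ≤ i → i ≤ n → br (eN i) (eN 1) = if i = 1 then eN 3 else eN (i + 1))
    (hee0 : ∀ i j, 1 ≤ i → i ≤ n → 2 ≤ j → j ≤ n → br (eN i) (eN j) = 0)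
    (hye1 : ∀ j, 1 ≤ j → j ≤ n - 1 → br (yN j) (eN 1) = yN (j + 1))
    (hye0 : ∀ j i, 1 ≤ j → j ≤ n - 1 → 2 ≤ i → i ≤ n → br (yN j) (eN i) = 0)
    (hey1 : ∀ i, 1 ≤ i → i ≤ n →
      br (eN i) (yN 1) = if i = 1 then (1 / 2 : ℂ) • yN 2 else (1 / 2 : ℂ) • yN i)
    (hey0 : ∀ i j, 1 ≤ i → i ≤ n → 2 ≤ j → j ≤ n - 1 → br (eN i) (yN j) = 0)
    (hyy1 : ∀ j, 1 ≤ j → j ≤ n - 1 →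
      br (yN j) (yN 1) = if j = 1 then eN 1 else eN (j + 1))
    (hyy0 : ∀ j k, 1 ≤ j → j ≤ n - 1 → 2 ≤ k → k ≤ n - 1 → br (yN j) (yN k) = 0)
    (hex : ∀ i, 1 ≤ i → i ≤ n →
      br (eN i) x = (if i = 1 then (2 : ℂ) else 2 * ((i : ℂ) - 1)) • eN i)
    (hyx : ∀ i, 1 ≤ i → i ≤ n - 1 → br (yN i) x = (2 * (i : ℂ) - 1) • yN i)
    (hxe : ∀ i, 1 ≤ i → i ≤ n → br x (eN i) = if i = 1 then (-2 : ℂ) • eN 1 else 0)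
    (hxy : ∀ j, 1 ≤ j → j ≤ n - 1 → br x (yN j) = if j = 1 then -yN 1 else 0)
    (hxx : br x x = 0)
    -- the grading:
    (G : ZMod 2 → Submodule ℂ V)
    (hG0 : G 0 = Submodule.span ℂ
      (insert x (Set.range fun i : Fin n => bas (Sum.inl i))))
    (hG1 : G 1 = Submodule.span ℂ
      (Set.range fun j : Fin (n - 1) => bas (Sum.inr (Sum.inr j)))) :
    -- SL satisfies the Leibniz superidentity:
    (∀ (α β : ZMod 2) (u : V), ∀ v ∈ G α, ∀ w ∈ G β,
      br u (br v w) = br (br u v) w - ((-1 : ℂ) ^ (α.val * β.val)) • br (br u w) v) ∧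
    -- SL is solvable:
    (∃ k : ℕ, derSeries br k = ⊥) ∧
    -- N is nilpotent and [SL,SL] ⊆ N:
    (∃ k : ℕ, lcsIn br (Submodule.span ℂ
      ((Set.range fun i : Fin n => bas (Sum.inl i)) ∪
        (Set.range fun j : Fin (n - 1) => bas (Sum.inr (Sum.inr j))))) k = ⊥) ∧
    (∀ u v : V, br u v ∈ Submodule.span ℂ
      ((Set.range fun i : Fin n => bas (Sum.inl i)) ∪
        (Set.range fun j : Fin (n - 1) => bas (Sum.inr (Sum.inr j))))) := by
  have T : IsSLTable n br eN yN x := ⟨by omega, span_insert_range_eq_top bas heN hx hyN, heN0, hyN0,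
    hee1, hee0, hye1, hye0, hey1, hey0, hyy1, hyy0, hex, hyx, hxe, hxy, hxx⟩
  have hG0' : G 0 ≤ span ℂ (insert x (range eN)) :=
    hG0 ▸ span_mono (insert_subset_insert (range_basis_inl_subset bas heN))
  have hG1' : G 1 ≤ span ℂ (range yN) := hG1 ▸ span_mono (range_basis_inr_inr_subset bas hyN)
  rw [span_range_basis_eq bas heN heN0 hyN hyN0]
  refine ⟨fun α β u v hv w hw => ?_, ⟨_, T.derSeries_eq_bot⟩, ⟨_, T.lcsIn_eq_bot⟩, T.apply_mem_span⟩
  exact (isLeibnizPair_iff br).1 (T.isLeibnizPair_of_mem_grading hG0' hG1' α β hv hw) u
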